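/- arXiv:2407.10859 — 6 statements merged into one kernel-verified Lean document; each statement's English description precedes it below -/
import Mathlib

section
/- Let F be a number field, let n ≥ 1, and let b be a weight for F. Assume there exists an integer W such that for every embedding η of F one has Σ_{j=1}^{n} (b^η_j + b^{η̄}_j) = W. Then the following are equivalent: (a) for every embedding η and every 1 ≤ i ≤ n−1, b^η_i − b^η_{i+1} = b^{η̄}_{n−i} − b^{η̄}_{n−i+1} (i.e. a_i^η = a_{n−i}^{η̄} for the differences a_i^η := b^η_i − b^η_{i+1} + 1); (b) there exists an integer w such that b^η_j + b^{η̄}_{n+1−j} = w for every embedding η and every 1 ≤ j ≤ n. Moreover, when (b) holds the integer w satisfies n·w = W. -/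
/-- Purity condition for a weight of a number field `F`.
A weight is a family `b` assigning to each embedding `η : F →+* ℂ` an
`n`-tuple of integers `(b η 1, …, b η n)`; the conjugate embedding is
`(starRingEnd ℂ).comp η`.  Assuming the algebraicity condition
`Σ_{j=1}^n (b^η_j + b^{η̄}_j) = W` for all `η`, the two forms of the
purity condition are equivalent, and the purity weight `w` satisfies
`n·w = W`. -/
theorem purity_condition_equiv
    (F : Type*) [Field F] [NumberField F]
    (n : ℕ) (hn : 1 ≤ n)
    (b : (F →+* ℂ) → ℕ → ℤ)
    (W : ℤ)
    (hW : ∀ η : F →+* ℂ,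
      (∑ j ∈ Finset.Icc 1 n, (b η j + b ((starRingEnd ℂ).comp η) j)) = W) :
    ((∀ η : F →+* ℂ, ∀ i, 1 ≤ i → i ≤ n - 1 →
        b η i - b η (i + 1)
          = b ((starRingEnd ℂ).comp η) (n - i) - b ((starRingEnd ℂ).comp η) (n - i + 1))
      ↔
      (∃ w : ℤ, ∀ η : F →+* ℂ, ∀ j, 1 ≤ j → j ≤ n →
        b η j + b ((starRingEnd ℂ).comp η) (n + 1 - j) = w))
    ∧
    (∀ w : ℤ,
      (∀ η : F →+* ℂ, ∀ j, 1 ≤ j → j ≤ n →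
        b η j + b ((starRingEnd ℂ).comp η) (n + 1 - j) = w) →
      (n : ℤ) * w = W) := by
  have hne : Nonempty (F →+* ℂ) := by
    have hcard := NumberField.Embeddings.card F ℂ
    have hpos : 0 < Fintype.card (F →+* ℂ) := by
      rw [hcard]; exact Module.finrank_pos
    exact Fintype.card_pos_iff.mp hpos
  -- reindexed sum
  have key : ∀ η : F →+* ℂ,
      (∑ j ∈ Finset.Icc 1 n, (b η j + b ((starRingEnd ℂ).comp η) (n + 1 - j))) = W := by
    intro η
    rw [← hW η, Finset.sum_add_distrib, Finset.sum_add_distrib]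
    congr 1
    refine Finset.sum_nbij' (fun j => n + 1 - j) (fun j => n + 1 - j) ?_ ?_ ?_ ?_ ?_ <;>
      intro a ha <;> simp only [Finset.mem_Icc] at * <;> omega
  constructor
  · constructor
    · intro ha
      -- constancy of c η j := b η j + b η̄ (n+1-j)
      have hconst : ∀ η : F →+* ℂ, ∀ j, 1 ≤ j → j ≤ n →
          b η j + b ((starRingEnd ℂ).comp η) (n + 1 - j)
            = b η 1 + b ((starRingEnd ℂ).comp η) n := by
        intro η j
        induction j with
        | zero => omega
        | succ k ih =>
          intro h1 h2
          rcases Nat.eq_or_lt_of_le h1 with h | h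
          · simp only [← h]
            have : n + 1 - 1 = n := by omega
            rw [this]
          · have hk1 : 1 ≤ k := by omega
            have hkn : k ≤ n - 1 := by omega
            have := ha η k hk1 hkn
            have e1 : n + 1 - (k + 1) = n - k := by omega
            have e2 : n - k + 1 = n + 1 - k := by omega
            rw [e2] at this
            rw [e1]
            have hprev := ih hk1 (by omega)
            omega
      have hsum : ∀ η : F →+* ℂ,
          (n : ℤ) * (b η 1 + b ((starRingEnd ℂ).comp η) n) = W := by
        intro η
        rw [← key η]
        rw [Finset.sum_congr rfl (fun j hj => by
          have hj' := Finset.mem_Icc.mp hj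
          exact hconst η j hj'.1 hj'.2)]
        rw [Finset.sum_const, Nat.card_Icc]
        simp only [Nat.add_sub_cancel, nsmul_eq_mul]
      obtain ⟨η₀⟩ := hne
      refine ⟨b η₀ 1 + b ((starRingEnd ℂ).comp η₀) n, ?_⟩
      intro η j h1 h2
      have h1' := hsum η
      have h2' := hsum η₀
      have hnz : (n : ℤ) ≠ 0 := by exact_mod_cast Nat.one_le_iff_ne_zero.mp hn
      have : b η 1 + b ((starRingEnd ℂ).comp η) n
          = b η₀ 1 + b ((starRingEnd ℂ).comp η₀) n := by
        have := h1'.trans h2'.symm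
        exact mul_left_cancel₀ hnz this
      rw [hconst η j h1 h2, this]
    · rintro ⟨w, hw⟩ η i h1 h2
      have e1 := hw η i h1 (by omega)
      have e2 := hw η (i + 1) (by omega) (by omega)
      have e3 : n + 1 - (i + 1) = n - i := by omega
      have e4 : n - i + 1 = n + 1 - i := by omega
      rw [e3] at e2
      rw [e4]
      omega
  · intro w hw
    obtain ⟨η₀⟩ := hne
    have : (∑ j ∈ Finset.Icc 1 n, (b η₀ j + b ((starRingEnd ℂ).comp η₀) (n + 1 - j)))
        = ∑ j ∈ Finset.Icc 1 n, w := by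
      refine Finset.sum_congr rfl fun j hj => ?_
      have hj' := Finset.mem_Icc.mp hj
      exact hw η₀ j hj'.1 hj'.2
    rw [key η₀] at this
    rw [Finset.sum_const, Nat.card_Icc] at this
    simp at this
    omega
end

section
/- Let E be a number field that is a finite Galois extension of ℚ, let F be a number field equipped with a ring homomorphism into E (so E is an F-algebra), let n ≥ 1, and let b be a family assigning to each ring homomorphism τ : F →+* E an n-tuple of integers (b^τ_1, …, b^τ_n). For an embedding ι : E →+* ℂ and an integer w, say that b is ι-pure with weight w if for all τ, τ' : F →+* E with ι ∘ τ' = conj ∘ ι ∘ τ one has b^τ_j + b^{τ'}_{n+1−j} = w for all 1 ≤ j ≤ n. Then the following are equivalent: (i) there exist an embedding ι₀ : E →+* ℂ and an integer w such that b is (σ ∘ ι₀)-pure with weight w for every ring automorphism σ of ℂ; (ii) there exists an integer w such that b is (σ ∘ ι)-pure with weight w for every embedding ι : E →+* ℂ and every ring automorphism σ of ℂ; (iii) there exists an integer w such that b is ι-pure with weight w for every embedding ι : E →+* ℂ. -/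
/-!
Two embeddings of a countable field `E` into `ℂ` differ by an automorphism of `ℂ`: a
bijection between transcendence bases of `ℂ` over the two copies of `E` (both of
cardinality `𝔠`) gives an isomorphism of the purely transcendental subfields over `E`,
which extends to their algebraic closure `ℂ`. Hence the `Aut(ℂ)`-orbit of any embedding
is the set of all embeddings, and each of the three conditions says that `b` is `ι`-pure
of one common weight for every `ι : E →+* ℂ`.
-/

/-- `b` is `ι`-pure with purity weight `w`: for embeddings `τ, τ' : F →+* E`
with `ι ∘ τ' = conj ∘ ι ∘ τ` one has `b τ j + b τ' (n+1−j) = w` for all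
`1 ≤ j ≤ n`. -/
def IsIotaPure (F E : Type*) [Field F] [Field E] (n : ℕ)
    (b : (F →+* E) → ℕ → ℤ) (ι : E →+* ℂ) (w : ℤ) : Prop :=
  ∀ τ τ' : F →+* E, ι.comp τ' = (starRingEnd ℂ).comp (ι.comp τ) →
    ∀ j, 1 ≤ j → j ≤ n → b τ j + b τ' (n + 1 - j) = w

universe u v

open Cardinal

theorem IsAlgClosed.exists_ringEquiv_comp_eq {R : Type*} {K : Type u} {L : Type v}
    [Field R] [Countable R] [Field K] [Field L] [IsAlgClosed K] [IsAlgClosed L]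
    (hK : ℵ₀ < #K) (hKL : Nonempty (K ≃ L))
    (f : R →+* K) (g : R →+* L) : ∃ σ : K ≃+* L, σ.toRingHom.comp f = g := by
  algebraize [f, g]
  obtain ⟨s, hs⟩ := exists_isTranscendenceBasis R (A := K)
  obtain ⟨t, ht⟩ := exists_isTranscendenceBasis R (A := L)
  have hL : ℵ₀ < #L := by
    rwa [← aleph0_lt_lift.{v, u}, ← lift_mk_eq'.2 hKL, aleph0_lt_lift]
  obtain ⟨e⟩ : Nonempty (s ≃ t) := by
    refine lift_mk_eq'.1 ?_
    rw [← lift_injective (cardinal_eq_cardinal_transcendence_basis_of_aleph0_lt _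
        hs mk_le_aleph0 hK),
      ← lift_injective (cardinal_eq_cardinal_transcendence_basis_of_aleph0_lt _
        ht mk_le_aleph0 hL)]
    exact lift_mk_eq'.2 hKL
  let S := Algebra.adjoin R (Set.range ((↑) : s → K))
  let φ : S ≃ₐ[R] Algebra.adjoin R (Set.range ((↑) : t → L)) :=
    hs.1.aevalEquiv.symm.trans ((MvPolynomial.renameEquiv R e).trans ht.1.aevalEquiv)
  have := isAlgClosure_of_transcendence_basis _ hs
  have := isAlgClosure_of_transcendence_basis _ ht
  refine ⟨IsAlgClosure.equivOfEquiv K L φ.toRingEquiv, RingHom.ext fun x => ?_⟩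
  rw [RingHom.comp_apply, RingEquiv.toRingHom_eq_coe, RingEquiv.coe_toRingHom,
    ← RingHom.algebraMap_toAlgebra f, IsScalarTower.algebraMap_apply R S K x,
    IsAlgClosure.equivOfEquiv_algebraMap, AlgEquiv.coe_ringEquiv, φ.commutes,
    ← IsScalarTower.algebraMap_apply, RingHom.algebraMap_toAlgebra]

theorem Complex.forall_ringEquiv_comp_iff {E : Type*} [Field E] [Countable E]
    (ι₀ : E →+* ℂ) (P : (E →+* ℂ) → Prop) :
    (∀ σ : ℂ ≃+* ℂ, P (σ.toRingHom.comp ι₀)) ↔ ∀ ι, P ι := by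
  refine ⟨fun h ι => ?_, fun h σ => h _⟩
  obtain ⟨σ, rfl⟩ := IsAlgClosed.exists_ringEquiv_comp_eq
    (by rw [mk_complex]; exact aleph0_lt_continuum) ⟨.refl ℂ⟩ ι₀ ι
  exact h σ

theorem NumberField.countable (E : Type*) [Field E] [NumberField E] : Countable E :=
  .of_equiv _ (Module.finBasis ℚ E).equivFun.toEquiv.symm

theorem strongly_pure_characterizations_general
    (E : Type*) [Field E] [NumberField E]
    (F : Type*) [Field F]
    (n : ℕ)
    (b : (F →+* E) → ℕ → ℤ) :
    ((∃ ι₀ : E →+* ℂ, ∃ w : ℤ, ∀ σ : ℂ ≃+* ℂ,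
        IsIotaPure F E n b (σ.toRingHom.comp ι₀) w)
      ↔
      (∃ w : ℤ, ∀ ι : E →+* ℂ, ∀ σ : ℂ ≃+* ℂ,
        IsIotaPure F E n b (σ.toRingHom.comp ι) w))
    ∧
    ((∃ w : ℤ, ∀ ι : E →+* ℂ, ∀ σ : ℂ ≃+* ℂ,
        IsIotaPure F E n b (σ.toRingHom.comp ι) w)
      ↔
      (∃ w : ℤ, ∀ ι : E →+* ℂ, IsIotaPure F E n b ι w)) := by
  have := NumberField.countable E
  have orbit (w : ℤ) (ι₀ : E →+* ℂ) :
      (∀ σ : ℂ ≃+* ℂ, IsIotaPure F E n b (σ.toRingHom.comp ι₀) w) ↔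
        ∀ ι, IsIotaPure F E n b ι w :=
    Complex.forall_ringEquiv_comp_iff ι₀ (IsIotaPure F E n b · w)
  simp only [orbit, forall_const, exists_const, iff_self, and_self]

/-- characterizations of strongly-pure weights over the
coefficient field `E` (Proposition 3.1 of the paper), with `Gal(ℚ̄/ℚ)`
replaced by the group of ring automorphisms of `ℂ` acting by
post-composition. -/
theorem strongly_pure_characterizations
    (E : Type*) [Field E] [NumberField E] [IsGalois ℚ E]
    (F : Type*) [Field F] [NumberField F] [Algebra F E]
    (n : ℕ) (hn : 1 ≤ n)
    (b : (F →+* E) → ℕ → ℤ) :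
    ((∃ ι₀ : E →+* ℂ, ∃ w : ℤ, ∀ σ : ℂ ≃+* ℂ,
        IsIotaPure F E n b (σ.toRingHom.comp ι₀) w)
      ↔
      (∃ w : ℤ, ∀ ι : E →+* ℂ, ∀ σ : ℂ ≃+* ℂ,
        IsIotaPure F E n b (σ.toRingHom.comp ι) w))
    ∧
    ((∃ w : ℤ, ∀ ι : E →+* ℂ, ∀ σ : ℂ ≃+* ℂ,
        IsIotaPure F E n b (σ.toRingHom.comp ι) w)
      ↔
      (∃ w : ℤ, ∀ ι : E →+* ℂ, IsIotaPure F E n b ι w)) :=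
  strongly_pure_characterizations_general E F n b
end

section
/- Let F be a number field, let n ≥ 1, and let b be a weight that is strongly pure with purity weight w. Then for every ring automorphism σ of ℂ, every embedding η of F, and every 1 ≤ j ≤ n, one has b^{σ∘conj∘η}_j = b^{conj∘σ∘η}_j. -/
/-- if the weight `b` (a family of `n`-tuples of integers
indexed by the embeddings `η : F →+* ℂ`) is strongly pure with purity
weight `w`, then `b^{σ∘conj∘η}_j = b^{conj∘σ∘η}_j` for every ring
automorphism `σ` of `ℂ`, every embedding `η` and every `1 ≤ j ≤ n`
(key intermediate identity in the proof of Proposition 3.2). -/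
theorem strongly_pure_conj_comm
    (F : Type*) [Field F] [NumberField F]
    (n : ℕ) (hn : 1 ≤ n)
    (b : (F →+* ℂ) → ℕ → ℤ) (w : ℤ)
    (hb : ∀ σ : ℂ ≃+* ℂ, ∀ η : F →+* ℂ, ∀ j, 1 ≤ j → j ≤ n →
      b (σ.toRingHom.comp η) j
        + b (σ.toRingHom.comp ((starRingEnd ℂ).comp η)) (n + 1 - j) = w) :
    ∀ σ : ℂ ≃+* ℂ, ∀ η : F →+* ℂ, ∀ j, 1 ≤ j → j ≤ n →
      b (σ.toRingHom.comp ((starRingEnd ℂ).comp η)) j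
        = b ((starRingEnd ℂ).comp (σ.toRingHom.comp η)) j := by
  intro σ η j hj1 hjn
  set i := n + 1 - j with hi
  have hi1 : 1 ≤ i := by omega
  have hin : i ≤ n := by omega
  have hji : n + 1 - i = j := by omega
  have eq1 := hb σ η i hi1 hin
  have eq2 := hb (RingEquiv.refl ℂ) (σ.toRingHom.comp η) i hi1 hin
  rw [hji] at eq1 eq2
  have h1 : (RingEquiv.refl ℂ).toRingHom.comp (σ.toRingHom.comp η)
      = σ.toRingHom.comp η := by ext x; simp
  have h2 : (RingEquiv.refl ℂ).toRingHom.comp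
      ((starRingEnd ℂ).comp (σ.toRingHom.comp η))
      = (starRingEnd ℂ).comp (σ.toRingHom.comp η) := by ext x; simp
  rw [h1, h2] at eq2
  omega
end

section
/- Let G be a group acting on a set S, let c ∈ G satisfy c·c = 1, let X be any set, and let f : S → X be a function such that f(g • (c • s)) = f(c • (g • s)) for all g ∈ G and s ∈ S. Then f(γ • s) = f(s) for every element γ of the normal closure in G of the set {g·c·g⁻¹·c : g ∈ G} and every s ∈ S. -/
/-- abstract invariance lemma.  If `G` acts on `S`,
`c ∈ G` is an involution (`c·c = 1`), and `f : S → X` satisfies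
`f(g • (c • s)) = f(c • (g • s))` for all `g, s`, then `f` is invariant
under the normal closure of `{g·c·g⁻¹·c : g ∈ G}`. -/
theorem invariant_under_normalClosure
    (G S X : Type*) [Group G] [MulAction G S]
    (c : G) (hc : c * c = 1)
    (f : S → X)
    (hf : ∀ (g : G) (s : S), f (g • (c • s)) = f (c • (g • s))) :
    ∀ γ ∈ Subgroup.normalClosure {x : G | ∃ g : G, x = g * c * g⁻¹ * c},
      ∀ s : S, f (γ • s) = f s := by
  -- The subgroup of elements under which `f` is invariant
  set H : Subgroup G :=
    { carrier := {γ : G | ∀ s : S, f (γ • s) = f s}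
      one_mem' := by intro s; rw [one_smul]
      mul_mem' := by
        intro a b ha hb s
        rw [mul_smul, ha, hb]
      inv_mem' := by
        intro a ha s
        have := ha (a⁻¹ • s)
        rw [smul_inv_smul] at this
        exact this.symm } with hH
  have gen_mem : ∀ g : G, (g * c * g⁻¹ * c) ∈ H := by
    intro g s
    show f ((g * c * g⁻¹ * c) • s) = f s
    have h1 : (g * c * g⁻¹ * c) • s = g • (c • (g⁻¹ • (c • s))) := by
      simp [mul_smul]
    rw [h1, hf g (g⁻¹ • (c • s)), smul_inv_smul, ← mul_smul, hc, one_smul]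
  intro γ hγ s
  refine (show Subgroup.normalClosure _ ≤ H from ?_) hγ s
  rw [Subgroup.normalClosure]
  rw [Subgroup.closure_le]
  intro x hx
  rw [Group.mem_conjugatesOfSet_iff] at hx
  obtain ⟨a, ⟨g, rfl⟩, hconj⟩ := hx
  obtain ⟨h, rfl⟩ := isConj_iff.mp hconj
  have key : h * (g * c * g⁻¹ * c) * h⁻¹ =
      ((h * g) * c * (h * g)⁻¹ * c) * (h * c * h⁻¹ * c)⁻¹ := by
    have : c⁻¹ = c := by
      rw [inv_eq_iff_mul_eq_one, hc]
    simp [mul_assoc, this]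
    rw [show h⁻¹ * (c * (c * (h * (c * h⁻¹)))) = h⁻¹ * (c * c) * (h * (c * h⁻¹)) by
      simp [mul_assoc], hc]
    simp [mul_assoc]
  rw [key]
  exact H.mul_mem (gen_mem (h * g)) (H.inv_mem (gen_mem h))
end

section
/- Let F be a number field, let n ≥ 1, and let b be a weight that is strongly pure with purity weight w. Let N be the normal closure, in the group of ring automorphisms of ℂ, of the set {σ ∘ conj ∘ σ⁻¹ ∘ conj : σ a ring automorphism of ℂ}. Then for every γ ∈ N, every embedding η of F, and every 1 ≤ j ≤ n, one has b^{γ∘η}_j = b^η_j. -/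
/-- a strongly-pure weight `b` is invariant under the normal
closure, in the group of ring automorphisms of `ℂ`, of the set
`{σ ∘ conj ∘ σ⁻¹ ∘ conj}` (core invariance statement in the proof of
Proposition 3.2 of the paper).  Here multiplication in `ℂ ≃+* ℂ` is
composition: `(σ * τ) z = σ (τ z)`, and `conj` is complex conjugation. -/
theorem strongly_pure_invariant_normalClosure
    (F : Type*) [Field F] [NumberField F]
    (n : ℕ) (hn : 1 ≤ n)
    (b : (F →+* ℂ) → ℕ → ℤ) (w : ℤ)
    (hb : ∀ σ : ℂ ≃+* ℂ, ∀ η : F →+* ℂ, ∀ j, 1 ≤ j → j ≤ n →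
      b (σ.toRingHom.comp η) j
        + b (σ.toRingHom.comp ((starRingEnd ℂ).comp η)) (n + 1 - j) = w) :
    ∀ γ ∈ Subgroup.normalClosure
        {x : ℂ ≃+* ℂ | ∃ σ : ℂ ≃+* ℂ,
          x = σ * Complex.conjAe.toRingEquiv * σ⁻¹ * Complex.conjAe.toRingEquiv},
      ∀ η : F →+* ℂ, ∀ j, 1 ≤ j → j ≤ n →
        b (γ.toRingHom.comp η) j = b η j := by
  set c : ℂ ≃+* ℂ := Complex.conjAe.toRingEquiv with hc
  set S : Set (ℂ ≃+* ℂ) := {x : ℂ ≃+* ℂ | ∃ σ : ℂ ≃+* ℂ, x = σ * c * σ⁻¹ * c} with hS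
  -- the invariance property
  set P : (ℂ ≃+* ℂ) → Prop := fun γ => ∀ η : F →+* ℂ, ∀ j, 1 ≤ j → j ≤ n →
      b (γ.toRingHom.comp η) j = b η j with hP
  have hcc : c * c = 1 := by
    ext z
    show Complex.conjAe (Complex.conjAe z) = z
    simp
  -- composition lemma
  have comp_eq : ∀ (γ δ : ℂ ≃+* ℂ) (η : F →+* ℂ),
      (γ * δ).toRingHom.comp η = γ.toRingHom.comp (δ.toRingHom.comp η) := by
    intro γ δ η
    ext x
    rfl
  have one_comp : ∀ η : F →+* ℂ, (1 : ℂ ≃+* ℂ).toRingHom.comp η = η := by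
    intro η; ext x; rfl
  -- P is multiplicative, contains 1, closed under inverse
  have Pone : P 1 := by
    intro η j h1 h2
    rw [one_comp]
  have Pmul : ∀ γ δ, P γ → P δ → P (γ * δ) := by
    intro γ δ hγ hδ η j h1 h2
    rw [comp_eq, hγ _ j h1 h2, hδ _ j h1 h2]
  have Pinv : ∀ γ, P γ → P γ⁻¹ := by
    intro γ hγ η j h1 h2
    have := hγ (γ⁻¹.toRingHom.comp η) j h1 h2
    rw [← comp_eq, mul_inv_cancel, one_comp] at this
    exact this.symm
  -- conj as a ring hom is starRingEnd
  have hcstar : c.toRingHom = starRingEnd ℂ := rfl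
  -- generators satisfy P
  have Pgen : ∀ σ : ℂ ≃+* ℂ, P (σ * c * σ⁻¹ * c) := by
    intro σ η j h1 h2
    have hj' : 1 ≤ n + 1 - j := by omega
    have hj'2 : n + 1 - j ≤ n := by omega
    have hA := hb σ ((σ⁻¹.toRingHom).comp ((starRingEnd ℂ).comp η)) (n + 1 - j) hj' hj'2
    have hC := hb 1 η j h1 h2
    have hnj : n + 1 - (n + 1 - j) = j := by omega
    rw [hnj] at hA
    -- identify the ring homs in hA
    have e1 : σ.toRingHom.comp ((σ⁻¹.toRingHom).comp ((starRingEnd ℂ).comp η))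
        = (starRingEnd ℂ).comp η := by
      ext x
      exact σ.apply_symm_apply _
    have e2 : σ.toRingHom.comp ((starRingEnd ℂ).comp
        ((σ⁻¹.toRingHom).comp ((starRingEnd ℂ).comp η)))
        = (σ * c * σ⁻¹ * c).toRingHom.comp η := by
      ext x
      rfl
    rw [e1, e2] at hA
    -- identify hC
    rw [one_comp] at hC
    have e3 : (1 : ℂ ≃+* ℂ).toRingHom.comp ((starRingEnd ℂ).comp η)
        = (starRingEnd ℂ).comp η := one_comp _
    rw [e3] at hC
    omega
  -- the subgroup of elements satisfying P
  let H : Subgroup (ℂ ≃+* ℂ) :=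
    { carrier := {γ | P γ}
      one_mem' := Pone
      mul_mem' := fun {γ δ} hγ hδ => Pmul γ δ hγ hδ
      inv_mem' := fun {γ} hγ => Pinv γ hγ }
  -- conjugates of generators are in H
  have hconj : Group.conjugatesOfSet S ⊆ (H : Set (ℂ ≃+* ℂ)) := by
    intro x hx
    rw [Group.mem_conjugatesOfSet_iff] at hx
    obtain ⟨a, ⟨σ, rfl⟩, τ, hτ⟩ := hx
    rw [SemiconjBy] at hτ
    set u : ℂ ≃+* ℂ := (τ : ℂ ≃+* ℂ) with hu
    have hcinv : c⁻¹ = c := by rw [inv_eq_iff_mul_eq_one, hcc]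
    have hx' : x = (u * (σ * c * σ⁻¹ * c)) * u⁻¹ :=
      eq_mul_inv_of_mul_eq hτ.symm
    have h2 : (u * (σ * c * σ⁻¹ * c)) * u⁻¹ * (u * c * u⁻¹ * c)
        = u * σ * c * σ⁻¹ * (c * c) * u⁻¹ * c := by
      group
    have key1 : (u * σ) * c * (u * σ)⁻¹ * c = x * (u * c * u⁻¹ * c) := by
      rw [hx', h2, hcc, mul_one]
      group
    have key : x = ((u * σ) * c * (u * σ)⁻¹ * c) * (u * c * u⁻¹ * c)⁻¹ :=
      (eq_mul_inv_of_mul_eq key1.symm)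
    rw [key]
    exact H.mul_mem (Pgen (u * σ)) (H.inv_mem (Pgen u))
  -- conclude
  intro γ hγ
  have : Subgroup.normalClosure S ≤ H := by
    rw [Subgroup.normalClosure]
    exact (Subgroup.closure_le H).mpr hconj
  exact this hγ
end

section
/- Let F ⊆ ℂ be a number field that is Galois over ℚ (a finite-dimensional intermediate field of ℂ/ℚ with ℂ/F/ℚ such that F/ℚ is Galois), and let c ∈ Gal(F/ℚ) be the automorphism satisfying c(x) = conj(x) for all x ∈ F, where conj is complex conjugation on ℂ. Let N be the normal closure in Gal(F/ℚ) of the set {g·c·g⁻¹·c : g ∈ Gal(F/ℚ)}, and let F₁ be the fixed field of N. Let n ≥ 1 and let b be a weight for F that is strongly pure with purity weight w. Then for any two embeddings η, η' of F that agree on F₁ (i.e. η(x) = η'(x) for all x ∈ F₁), one has b^η_j = b^{η'}_j for all 1 ≤ j ≤ n. -/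
/-!
Since `F/ℚ` is Galois, every embedding is `ι ∘ τ` with `τ ∈ Gal(F/ℚ)`, and every `σ ∈ Gal(F/ℚ)`
extends to an automorphism of `ℂ`; so strong purity reads
`b(στ)_j + b(σcτ)_{n+1-j} = w` for all `σ, τ`. Applying this to `(σg, g⁻¹cρ)` and to `(σ, ρ)`
gives `b(σ·gcg⁻¹c·ρ) = b(σρ)`. The elements `s` with `b(σsρ) = b(σρ)` for all `σ, ρ` form a
normal subgroup, which therefore contains `N`; and by the Galois correspondence two embeddings
agreeing on `F₁ = F^N` differ by an element of `N`.
-/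

section InsertStabilizer

variable {G α : Type*} [Group G]

def insertStabilizer (B : G → α) : Subgroup G where
  carrier := {s | ∀ σ ρ, B (σ * s * ρ) = B (σ * ρ)}
  one_mem' σ ρ := by rw [mul_one]
  mul_mem' {a b} ha hb σ ρ := by rw [← mul_assoc, hb, ha]
  inv_mem' {a} ha σ ρ := by simpa using (ha (σ * a⁻¹) ρ).symm

instance (B : G → α) : (insertStabilizer B).Normal where
  conj_mem a ha g σ ρ := by simpa [mul_assoc] using ha (σ * g) (g⁻¹ * ρ)

theorem apply_mul_eq_of_mem_insertStabilizer {B : G → α} {s : G} (hs : s ∈ insertStabilizer B)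
    (σ : G) : B (σ * s) = B σ := by
  simpa using hs σ 1

theorem normalClosure_le_insertStabilizer {B : G → ℕ → ℤ} {c : G} {n : ℕ}
    {w : ℤ} (hB : ∀ σ τ j, 1 ≤ j → j ≤ n → B (σ * τ) j + B (σ * c * τ) (n + 1 - j) = w) :
    Subgroup.normalClosure {x | ∃ g : G, x = g * c * g⁻¹ * c} ≤
      insertStabilizer fun τ => (Set.Icc 1 n).domRestrict (B τ) := by
  refine Subgroup.normalClosure_le_normal ?_
  rintro _ ⟨g, rfl⟩ σ ρ
  funext ⟨j, hj1, hjn⟩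
  have reflect := hB σ ρ j hj1 hjn
  have reflect' := hB (σ * g) (g⁻¹ * c * ρ) (n + 1 - j) (by omega) (by omega)
  rw [show n + 1 - (n + 1 - j) = j by omega, show σ * g * (g⁻¹ * c * ρ) = σ * c * ρ by group,
    show σ * g * c * (g⁻¹ * c * ρ) = σ * (g * c * g⁻¹ * c) * ρ by group] at reflect'
  simp only [Set.domRestrict_apply]
  omega

end InsertStabilizer

theorem IsAlgClosed.exists_ringEquiv_extension {F Ω : Type*} [Field F] [Field Ω] [Algebra F Ω]
    [IsAlgClosed Ω] (τ : F ≃+* F) :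
    ∃ σ : Ω ≃+* Ω, ∀ x, σ (algebraMap F Ω x) = algebraMap F Ω (τ x) := by
  -- extend `τ` to `F(s)` for a transcendence basis `s`, then to its algebraic closure `Ω`
  obtain ⟨s, hs⟩ := exists_isTranscendenceBasis F Ω
  have := IsAlgClosed.isAlgClosure_of_transcendence_basis _ hs
  let A := Algebra.adjoin F (Set.range ((↑) : s → Ω))
  let e : A ≃+* A := (hs.1.aevalEquiv.symm.toRingEquiv.trans (MvPolynomial.mapEquiv s τ)).trans
      hs.1.aevalEquiv.toRingEquiv
  have he : ∀ x, e (algebraMap F A x) = algebraMap F A (τ x) := fun x => by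
    change hs.1.aevalEquiv (MvPolynomial.mapEquiv s τ (hs.1.aevalEquiv.symm _)) = _
    rw [AlgEquiv.commutes, MvPolynomial.algebraMap_eq, MvPolynomial.mapEquiv_apply,
      MvPolynomial.map_C, ← MvPolynomial.algebraMap_eq, AlgEquiv.commutes]
    rfl
  refine ⟨IsAlgClosure.equivOfEquiv Ω Ω e, fun x => ?_⟩
  rw [IsScalarTower.algebraMap_apply F A Ω, IsAlgClosure.equivOfEquiv_algebraMap, he,
    ← IsScalarTower.algebraMap_apply]

theorem AlgHom.exists_eq_algebraMap_comp {K E L : Type*} [Field K] [Field E] [Field L]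
    [Algebra K E] [Algebra K L] [Algebra E L] [IsScalarTower K E L] [Normal K E]
    (φ : E →ₐ[K] L) : ∃ τ : Gal(E/K), (φ : E →+* L) = (algebraMap E L).comp τ :=
  ⟨φ.restrictNormal' E, RingHom.ext fun x => (φ.restrictNormal_commutes E x).symm⟩

theorem IntermediateField.inv_mul_mem_of_eqOn_fixedField {K E : Type*} [Field K] [Field E]
    [Algebra K E] [FiniteDimensional K E] [IsGalois K E] {H : Subgroup Gal(E/K)}
    {σ τ : Gal(E/K)} (h : ∀ x ∈ fixedField H, σ x = τ x) : τ⁻¹ * σ ∈ H := by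
  rw [← fixingSubgroup_fixedField H]
  intro ⟨x, hx⟩
  simp [h x hx]

theorem strongly_pure_on_galoisGroup (F : IntermediateField ℚ ℂ) (c : F ≃ₐ[ℚ] F)
    (hc : ∀ x : F, (c x : ℂ) = starRingEnd ℂ (x : ℂ)) (n : ℕ) (b : (F →+* ℂ) → ℕ → ℤ) (w : ℤ)
    (hb : ∀ σ : ℂ ≃+* ℂ, ∀ η : F →+* ℂ, ∀ j, 1 ≤ j → j ≤ n →
      b (σ.toRingHom.comp η) j
        + b (σ.toRingHom.comp ((starRingEnd ℂ).comp η)) (n + 1 - j) = w)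
    (σ τ : F ≃ₐ[ℚ] F) (j : ℕ) (hj1 : 1 ≤ j) (hjn : j ≤ n) :
    b ((algebraMap F ℂ).comp ((σ * τ : F ≃ₐ[ℚ] F) : F →+* F)) j
      + b ((algebraMap F ℂ).comp ((σ * c * τ : F ≃ₐ[ℚ] F) : F →+* F)) (n + 1 - j) = w := by
  obtain ⟨S, hS⟩ := IsAlgClosed.exists_ringEquiv_extension (Ω := ℂ) (σ : F ≃+* F)
  have hSτ (ρ : F ≃ₐ[ℚ] F) : S.toRingHom.comp ((algebraMap F ℂ).comp (ρ : F →+* F)) =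
      (algebraMap F ℂ).comp (σ * ρ : F ≃ₐ[ℚ] F) :=
    RingHom.ext fun x => hS (ρ x)
  have hcτ : (starRingEnd ℂ).comp ((algebraMap F ℂ).comp (τ : F →+* F)) =
      (algebraMap F ℂ).comp (c * τ : F ≃ₐ[ℚ] F) :=
    RingHom.ext fun x => (hc (τ x)).symm
  have := hb S ((algebraMap F ℂ).comp (τ : F →+* F)) j hj1 hjn
  rwa [hcτ, hSτ, hSτ, ← mul_assoc] at this

theorem strongly_pure_base_change_general
    (F : IntermediateField ℚ ℂ) [FiniteDimensional ℚ F] [IsGalois ℚ F]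
    (c : F ≃ₐ[ℚ] F) (hc : ∀ x : F, (c x : ℂ) = starRingEnd ℂ (x : ℂ))
    (n : ℕ)
    (b : (F →+* ℂ) → ℕ → ℤ) (w : ℤ)
    (hb : ∀ σ : ℂ ≃+* ℂ, ∀ η : F →+* ℂ, ∀ j, 1 ≤ j → j ≤ n →
      b (σ.toRingHom.comp η) j
        + b (σ.toRingHom.comp ((starRingEnd ℂ).comp η)) (n + 1 - j) = w)
    (η η' : F →+* ℂ)
    (hagree : ∀ x : F,
      x ∈ IntermediateField.fixedField
        (Subgroup.normalClosure
          {x : F ≃ₐ[ℚ] F | ∃ g : F ≃ₐ[ℚ] F, x = g * c * g⁻¹ * c}) →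
      η x = η' x) :
    ∀ j, 1 ≤ j → j ≤ n → b η j = b η' j := by
  obtain ⟨τ, hτ⟩ := η.toRatAlgHom.exists_eq_algebraMap_comp
  obtain ⟨τ', hτ'⟩ := η'.toRatAlgHom.exists_eq_algebraMap_comp
  change η = _ at hτ
  change η' = _ at hτ'
  subst hτ hτ'
  have hmem := IntermediateField.inv_mul_mem_of_eqOn_fixedField fun x hx =>
    (algebraMap F ℂ).injective (hagree x hx)
  have hinv := normalClosure_le_insertStabilizer
    (B := fun τ : F ≃ₐ[ℚ] F => b ((algebraMap F ℂ).comp (τ : F →+* F)))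
    (strongly_pure_on_galoisGroup F c hc n b w hb) hmem
  intro j hj1 hjn
  simpa using congrFun (apply_mul_eq_of_mem_insertStabilizer hinv τ') ⟨j, hj1, hjn⟩

/-- Proposition 3.2 of the paper for `F ⊆ ℂ` Galois over `ℚ`.
Let `c ∈ Gal(F/ℚ)` be the restriction of complex conjugation, `N` the
normal closure of `{g·c·g⁻¹·c}`, and `F₁` its fixed field.  If the weight
`b` is strongly pure with purity weight `w`, then `b^η = b^{η'}` whenever
the embeddings `η, η' : F →+* ℂ` agree on `F₁`. -/
theorem strongly_pure_base_change
    (F : IntermediateField ℚ ℂ) [FiniteDimensional ℚ F] [IsGalois ℚ F]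
    (c : F ≃ₐ[ℚ] F) (hc : ∀ x : F, (c x : ℂ) = starRingEnd ℂ (x : ℂ))
    (n : ℕ) (hn : 1 ≤ n)
    (b : (F →+* ℂ) → ℕ → ℤ) (w : ℤ)
    (hb : ∀ σ : ℂ ≃+* ℂ, ∀ η : F →+* ℂ, ∀ j, 1 ≤ j → j ≤ n →
      b (σ.toRingHom.comp η) j
        + b (σ.toRingHom.comp ((starRingEnd ℂ).comp η)) (n + 1 - j) = w)
    (η η' : F →+* ℂ)
    (hagree : ∀ x : F,
      x ∈ IntermediateField.fixedField
        (Subgroup.normalClosure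
          {x : F ≃ₐ[ℚ] F | ∃ g : F ≃ₐ[ℚ] F, x = g * c * g⁻¹ * c}) →
      η x = η' x) :
    ∀ j, 1 ≤ j → j ≤ n → b η j = b η' j :=
  strongly_pure_base_change_general F c hc n b w hb η η' hagree
end
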